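/- For any linear map φ : M_n → M_k, ‖φ‖_cb ≤ k · ‖φ‖. -/

import Mathlib

open scoped ComplexOrder

/-- The amplification `id_m ⊗ φ` of a linear map on matrices. -/
noncomputable def ampl {n k : ℕ} (m : ℕ)
    (φ : Matrix (Fin n) (Fin n) ℂ →ₗ[ℂ] Matrix (Fin k) (Fin k) ℂ) :
    Matrix (Fin m × Fin n) (Fin m × Fin n) ℂ →ₗ[ℂ]
      Matrix (Fin m × Fin k) (Fin m × Fin k) ℂ where
  toFun M := Matrix.of fun p q => φ (Matrix.of fun a b => M (p.1, a) (q.1, b)) p.2 q.2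
  map_add' M N := by
    ext p q
    show φ (Matrix.of fun a b => (M + N) (p.1, a) (q.1, b)) p.2 q.2
        = φ (Matrix.of fun a b => M (p.1, a) (q.1, b)) p.2 q.2
          + φ (Matrix.of fun a b => N (p.1, a) (q.1, b)) p.2 q.2
    rw [show (Matrix.of fun a b => (M + N) (p.1, a) (q.1, b))
        = (Matrix.of fun a b => M (p.1, a) (q.1, b))
          + (Matrix.of fun a b => N (p.1, a) (q.1, b)) from rfl, map_add]
    simp
  map_smul' c M := by
    ext p q
    show φ (Matrix.of fun a b => (c • M) (p.1, a) (q.1, b)) p.2 q.2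
        = c • φ (Matrix.of fun a b => M (p.1, a) (q.1, b)) p.2 q.2
    rw [show (Matrix.of fun a b => (c • M) (p.1, a) (q.1, b))
        = c • (Matrix.of fun a b => M (p.1, a) (q.1, b)) from rfl, map_smul]
    simp

/-- Operator (spectral) norm of a square complex matrix. -/
noncomputable def opN {n : Type*} [Fintype n] [DecidableEq n] (X : Matrix n n ℂ) : ℝ :=
  ‖(Matrix.toEuclideanCLM (𝕜 := ℂ) X : EuclideanSpace ℂ n →L[ℂ] EuclideanSpace ℂ n)‖

/-- Induced norm (w.r.t. operator norms) of a linear map between matrix algebras. -/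
noncomputable def mapNorm {a b : Type*} [Fintype a] [DecidableEq a] [Fintype b] [DecidableEq b]
    (ψ : Matrix a a ℂ →ₗ[ℂ] Matrix b b ℂ) : ℝ :=
  sSup {r : ℝ | ∃ X : Matrix a a ℂ, opN X ≤ 1 ∧ r = opN (ψ X)}

/-- The completely bounded norm `sup_m ‖id_m ⊗ φ‖`. -/
noncomputable def cbNorm {n k : ℕ}
    (φ : Matrix (Fin n) (Fin n) ℂ →ₗ[ℂ] Matrix (Fin k) (Fin k) ℂ) : ℝ :=
  ⨆ m : ℕ, mapNorm (ampl (m + 1) φ)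

/-- The positive semidefinite square root of a positive semidefinite matrix
(as defined in Mathlib, December 2024; removed since). -/
noncomputable def Matrix.PosSemidef.sqrt {𝕜 : Type*} [RCLike 𝕜] {n : Type*} [Fintype n]
    [DecidableEq n] {A : Matrix n n 𝕜} (hA : A.PosSemidef) : Matrix n n 𝕜 :=
  hA.1.eigenvectorUnitary.1 * Matrix.diagonal ((↑) ∘ (√·) ∘ hA.1.eigenvalues) *
  (star hA.1.eigenvectorUnitary : Matrix n n 𝕜)

/-- Trace norm of a matrix: the trace of `√(XᴴX)`. -/
noncomputable def traceNorm {a b : Type*} [Fintype a] [Fintype b] [DecidableEq b]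
    (X : Matrix a b ℂ) : ℝ :=
  ((Matrix.posSemidef_conjTranspose_mul_self X).sqrt.trace).re

/-- Induced trace-norm of a linear map between matrix algebras. -/
noncomputable def tMapNorm {a b : Type*} [Fintype a] [DecidableEq a] [Fintype b] [DecidableEq b]
    (ψ : Matrix a a ℂ →ₗ[ℂ] Matrix b b ℂ) : ℝ :=
  sSup {r : ℝ | ∃ X : Matrix a a ℂ, traceNorm X ≤ 1 ∧ r = traceNorm (ψ X)}

/-! For unit vectors `x, y ∈ ℂᵐ ⊗ ℂᵏ` with slices `xᵢ, yⱼ ∈ ℂᵐ`, the pairing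
`⟪x, (id_m ⊗ φ)(X) y⟫` equals `∑ᵢⱼ φ(Xᵢⱼ)ᵢⱼ`, where `Xᵢⱼ = (xᵢ ⊗ 1)ᴴ X (yⱼ ⊗ 1) ∈ M_n` has
norm at most `‖xᵢ‖ ‖yⱼ‖ ‖X‖`. Each term is therefore at most `‖φ‖ ‖X‖ ‖xᵢ‖ ‖yⱼ‖`, and by
Cauchy–Schwarz `∑ᵢ ‖xᵢ‖ ≤ √k` because `∑ᵢ ‖xᵢ‖² = ‖x‖² = 1`; this gives the factor `k`. -/

open scoped Matrix.Norms.L2Operator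

section TensorVectors

variable {𝕜 : Type*} [RCLike 𝕜] {P ι : Type*} [Fintype P] [Fintype ι]

def kroneckerVec (w : EuclideanSpace 𝕜 P) (x : EuclideanSpace 𝕜 ι) : EuclideanSpace 𝕜 (P × ι) :=
  WithLp.toLp 2 fun pa => w pa.1 * x pa.2

lemma norm_kroneckerVec (w : EuclideanSpace 𝕜 P) (x : EuclideanSpace 𝕜 ι) :
    ‖kroneckerVec w x‖ = ‖w‖ * ‖x‖ := by
  rw [EuclideanSpace.norm_eq, EuclideanSpace.norm_eq, EuclideanSpace.norm_eq,
    ← Real.sqrt_mul (by positivity), Finset.sum_mul_sum, Fintype.sum_prod_type]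
  simp only [kroneckerVec, norm_mul, mul_pow]

def sliceVec (x : EuclideanSpace 𝕜 (P × ι)) (i : ι) : EuclideanSpace 𝕜 P :=
  WithLp.toLp 2 fun p => x (p, i)

lemma sum_norm_sq_sliceVec (x : EuclideanSpace 𝕜 (P × ι)) :
    ∑ i, ‖sliceVec x i‖ ^ 2 = ‖x‖ ^ 2 := by
  simp only [EuclideanSpace.norm_sq_eq, Fintype.sum_prod_type_right, sliceVec]

lemma sum_norm_sliceVec_le (x : EuclideanSpace 𝕜 (P × ι)) :
    ∑ i, ‖sliceVec x i‖ ≤ √(Fintype.card ι) * ‖x‖ := by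
  rw [← Real.sqrt_sq (norm_nonneg x), ← Real.sqrt_mul (by positivity),
    Real.le_sqrt (by positivity) (by positivity), ← sum_norm_sq_sliceVec]
  exact sq_sum_le_card_mul_sum_sq

lemma sum_norm_sliceVec_mul_sum_le {x y : EuclideanSpace 𝕜 (P × ι)} (hx : ‖x‖ = 1)
    (hy : ‖y‖ = 1) : (∑ i, ‖sliceVec x i‖) * ∑ j, ‖sliceVec y j‖ ≤ Fintype.card ι := by
  have h := mul_le_mul (sum_norm_sliceVec_le x) (sum_norm_sliceVec_le y) (by positivity)
    (by positivity)
  rwa [hx, hy, mul_one, Real.mul_self_sqrt (Nat.cast_nonneg _)] at h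

end TensorVectors

namespace Matrix

variable {𝕜 : Type*} [RCLike 𝕜]

lemma norm_entry_le_l2_opNorm {m n : Type*} [Fintype m] [Fintype n] [DecidableEq n]
    (A : Matrix m n 𝕜) (i : m) (j : n) : ‖A i j‖ ≤ ‖A‖ := by
  have h := A.l2_opNorm_mulVec (EuclideanSpace.single j 1)
  rw [PiLp.norm_single, norm_one, mul_one] at h
  refine le_trans ?_ (h.trans' (PiLp.norm_apply_le _ i))
  simp

section Square

variable {n : Type*} [Fintype n] [DecidableEq n]

lemma inner_toEuclideanCLM_eq_sum (A : Matrix n n 𝕜) (x y : EuclideanSpace 𝕜 n) :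
    inner 𝕜 x (toEuclideanCLM (𝕜 := 𝕜) A y) = ∑ i, ∑ j, star (x i) * A i j * y j := by
  simp [PiLp.inner_apply, mulVec, dotProduct, Finset.mul_sum, mul_assoc, mul_comm, mul_left_comm]

lemma norm_inner_toEuclideanCLM_le (A : Matrix n n 𝕜) (x y : EuclideanSpace 𝕜 n) :
    ‖inner 𝕜 x (toEuclideanCLM (𝕜 := 𝕜) A y)‖ ≤ ‖A‖ * ‖x‖ * ‖y‖ :=
  calc ‖inner 𝕜 x (toEuclideanCLM (𝕜 := 𝕜) A y)‖
      ≤ ‖x‖ * ‖toEuclideanCLM (𝕜 := 𝕜) A y‖ := norm_inner_le_norm _ _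
    _ ≤ ‖x‖ * (‖A‖ * ‖y‖) := by gcongr; exact (toEuclideanCLM (𝕜 := 𝕜) A).le_opNorm y
    _ = ‖A‖ * ‖x‖ * ‖y‖ := by ring

lemma l2_opNorm_le_of_norm_inner_le (A : Matrix n n 𝕜) {C : ℝ} (hC : 0 ≤ C)
    (h : ∀ x y : EuclideanSpace 𝕜 n, ‖x‖ = 1 → ‖y‖ = 1 →
      ‖inner 𝕜 x (toEuclideanCLM (𝕜 := 𝕜) A y)‖ ≤ C) :
    ‖A‖ ≤ C :=
  ContinuousLinearMap.opNorm_le_of_re_inner_le hC fun y x hy hx =>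
    (RCLike.re_le_norm _).trans (by rw [norm_inner_symm]; exact h x y hx hy)

end Square

section PartialPairing

variable {P ι : Type*} [Fintype P] [Fintype ι]

/-- `(w ⊗ 1)ᴴ X (u ⊗ 1)`. -/
def partialPairing (X : Matrix (P × ι) (P × ι) 𝕜) (w u : EuclideanSpace 𝕜 P) : Matrix ι ι 𝕜 :=
  ∑ p, ∑ q, (star (w p) * u q) • (comp P P ι ι 𝕜).symm X p q

variable [DecidableEq P] [DecidableEq ι]

lemma inner_partialPairing (X : Matrix (P × ι) (P × ι) 𝕜) (w u : EuclideanSpace 𝕜 P)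
    (x y : EuclideanSpace 𝕜 ι) :
    inner 𝕜 x (toEuclideanCLM (𝕜 := 𝕜) (partialPairing X w u) y)
      = inner 𝕜 (kroneckerVec w x) (toEuclideanCLM (𝕜 := 𝕜) X (kroneckerVec u y)) := by
  simp only [inner_toEuclideanCLM_eq_sum, partialPairing, kroneckerVec, sum_apply, smul_apply,
    comp_symm_apply, smul_eq_mul, Finset.mul_sum, Finset.sum_mul, Fintype.sum_prod_type_right,
    star_mul]
  refine Finset.sum_congr rfl fun a _ => ?_
  rw [Finset.sum_comm]
  refine Finset.sum_congr rfl fun p _ => Finset.sum_congr rfl fun b _ =>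
    Finset.sum_congr rfl fun q _ => ?_
  ring

lemma l2_opNorm_partialPairing_le (X : Matrix (P × ι) (P × ι) 𝕜) (w u : EuclideanSpace 𝕜 P) :
    ‖partialPairing X w u‖ ≤ ‖w‖ * ‖u‖ * ‖X‖ := by
  refine l2_opNorm_le_of_norm_inner_le _ (by positivity) fun x y hx hy => ?_
  rw [inner_partialPairing]
  calc _ ≤ ‖X‖ * ‖kroneckerVec w x‖ * ‖kroneckerVec u y‖ := norm_inner_toEuclideanCLM_le _ _ _
    _ = ‖w‖ * ‖u‖ * ‖X‖ := by rw [norm_kroneckerVec, norm_kroneckerVec, hx, hy]; ring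

end PartialPairing

end Matrix

section MapNorm

variable {a b : Type*} [Fintype a] [DecidableEq a] [Fintype b] [DecidableEq b]
  (ψ : Matrix a a ℂ →ₗ[ℂ] Matrix b b ℂ)

lemma opN_eq_norm (X : Matrix a a ℂ) : opN X = ‖X‖ := rfl

lemma mapNorm_eq_opNorm : mapNorm ψ = ‖LinearMap.toContinuousLinearMap ψ‖ := by
  rw [← ContinuousLinearMap.sSup_unitClosedBall_eq_norm, mapNorm]
  congr 1
  ext r
  simp [opN_eq_norm, eq_comm]

lemma norm_apply_le_mapNorm_mul (X : Matrix a a ℂ) : ‖ψ X‖ ≤ mapNorm ψ * ‖X‖ :=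
  (mapNorm_eq_opNorm ψ).symm ▸ (LinearMap.toContinuousLinearMap ψ).le_opNorm X

lemma mapNorm_nonneg : 0 ≤ mapNorm ψ :=
  (mapNorm_eq_opNorm ψ).symm ▸ norm_nonneg _

end MapNorm

section Amplification

variable {n k : ℕ} (φ : Matrix (Fin n) (Fin n) ℂ →ₗ[ℂ] Matrix (Fin k) (Fin k) ℂ) {m : ℕ}

lemma ampl_apply (X : Matrix (Fin m × Fin n) (Fin m × Fin n) ℂ) (p q : Fin m) (i j : Fin k) :
    ampl m φ X (p, i) (q, j) = φ ((Matrix.comp _ _ _ _ ℂ).symm X p q) i j := rfl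

lemma inner_ampl_eq_sum (X : Matrix (Fin m × Fin n) (Fin m × Fin n) ℂ)
    (x y : EuclideanSpace ℂ (Fin m × Fin k)) :
    inner ℂ x (Matrix.toEuclideanCLM (𝕜 := ℂ) (ampl m φ X) y)
      = ∑ i, ∑ j, φ (Matrix.partialPairing X (sliceVec x i) (sliceVec y j)) i j := by
  simp only [Matrix.inner_toEuclideanCLM_eq_sum, Matrix.partialPairing, map_sum, map_smul,
    Matrix.sum_apply, Matrix.smul_apply, smul_eq_mul, sliceVec, Fintype.sum_prod_type_right,
    ampl_apply]
  refine Finset.sum_congr rfl fun i _ => ?_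
  rw [Finset.sum_comm]
  refine Finset.sum_congr rfl fun j _ => Finset.sum_congr rfl fun p _ =>
    Finset.sum_congr rfl fun q _ => ?_
  ring

lemma l2_opNorm_ampl_le (X : Matrix (Fin m × Fin n) (Fin m × Fin n) ℂ) :
    ‖ampl m φ X‖ ≤ k * mapNorm φ * ‖X‖ := by
  have hφ := mapNorm_nonneg φ
  refine Matrix.l2_opNorm_le_of_norm_inner_le _ (by positivity) fun x y hx hy => ?_
  have term_le (i j : Fin k) :
      ‖φ (Matrix.partialPairing X (sliceVec x i) (sliceVec y j)) i j‖
        ≤ mapNorm φ * ‖X‖ * (‖sliceVec x i‖ * ‖sliceVec y j‖) :=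
    calc _ ≤ ‖φ (Matrix.partialPairing X (sliceVec x i) (sliceVec y j))‖ :=
          Matrix.norm_entry_le_l2_opNorm _ i j
      _ ≤ mapNorm φ * ‖Matrix.partialPairing X (sliceVec x i) (sliceVec y j)‖ :=
          norm_apply_le_mapNorm_mul φ _
      _ ≤ mapNorm φ * (‖sliceVec x i‖ * ‖sliceVec y j‖ * ‖X‖) := by
          gcongr; exact Matrix.l2_opNorm_partialPairing_le _ _ _
      _ = _ := by ring
  rw [inner_ampl_eq_sum]
  calc _ ≤ ∑ i, ∑ j, ‖φ (Matrix.partialPairing X (sliceVec x i) (sliceVec y j)) i j‖ :=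
        (norm_sum_le _ _).trans (Finset.sum_le_sum fun i _ => norm_sum_le _ _)
    _ ≤ ∑ i, ∑ j, mapNorm φ * ‖X‖ * (‖sliceVec x i‖ * ‖sliceVec y j‖) :=
        Finset.sum_le_sum fun i _ => Finset.sum_le_sum fun j _ => term_le i j
    _ = mapNorm φ * ‖X‖ * ((∑ i, ‖sliceVec x i‖) * ∑ j, ‖sliceVec y j‖) := by
        rw [Finset.sum_mul_sum, Finset.mul_sum]; simp only [Finset.mul_sum]
    _ ≤ mapNorm φ * ‖X‖ * k := by
        gcongr; simpa using sum_norm_sliceVec_mul_sum_le hx hy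
    _ = k * mapNorm φ * ‖X‖ := by ring

end Amplification

/-- `‖φ‖_cb ≤ k ⬝ ‖φ‖` for `φ : M_n → M_k`. -/
theorem cbNorm_le_k_mul_mapNorm {n k : ℕ}
    (φ : Matrix (Fin n) (Fin n) ℂ →ₗ[ℂ] Matrix (Fin k) (Fin k) ℂ) :
    cbNorm φ ≤ (k : ℝ) * mapNorm φ := by
  have hφ := mapNorm_nonneg φ
  refine Real.iSup_le (fun m => ?_) (by positivity)
  rw [mapNorm_eq_opNorm]
  exact ContinuousLinearMap.opNorm_le_bound _ (by positivity) (l2_opNorm_ampl_le φ)
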